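/- arXiv:2404.17404 — 2 statements merged into one kernel-verified Lean document; each statement's English description precedes it below -/
import Mathlib

section
/- Let (X,Y) be a random vector following a bivariate Ali–Mikhail–Haq (AMH) distribution with parameter θ = −1, i.e. P(X≤x, Y≤y) = F(x)G(y) / (1 + F̄(x)·Ḡ(y)) for all x,y, where F, G are the marginal distributions of X and Y, and assume D_Y is unbounded (Y has support reaching arbitrarily large values). Then (X,Y) is not conditionally dependent (CD): there is no positive measurable function s on (0,∞) such that lim_{x→∞} sup_{y∈D_Y} | P(X>x | Y=y) / (F̄(x)·s(y)) − 1 | = 0. -/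
open MeasureTheory Filter Set Real ProbabilityTheory

/-- Tail function `x ↦ P(X > x)` of a random variable `X` under measure `μ`. -/
noncomputable def tailP {Ω : Type*} [MeasurableSpace Ω] (μ : Measure Ω) (X : Ω → ℝ) (x : ℝ) : ℝ :=
  (μ {ω | x < X ω}).toReal

/-- Distribution function `x ↦ P(X ≤ x)`. -/
noncomputable def cdfP {Ω : Type*} [MeasurableSpace Ω] (μ : Measure Ω) (X : Ω → ℝ) (x : ℝ) : ℝ :=
  (μ {ω | X ω ≤ x}).toReal

/-- `D_X`: points near which `X` has positive mass. -/
def DSetX {Ω : Type*} [MeasurableSpace Ω] (μ : Measure Ω) (X : Ω → ℝ) : Set ℝ :=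
  {x | ∀ δ > (0 : ℝ), 0 < μ {ω | x - δ < X ω ∧ X ω < x + δ}}

/-- `D_Y`: positive points near which `Y` has positive mass. -/
def DSetY {Ω : Type*} [MeasurableSpace Ω] (μ : Measure Ω) (Y : Ω → ℝ) : Set ℝ :=
  {y | 0 < y ∧ ∀ δ > (0 : ℝ), 0 < μ {ω | y - δ < Y ω ∧ Y ω < y + δ}}

/-- `P(X > x | Y = y) = p`, where the conditional probability is defined as
`lim_{t↓0} P(X > x, Y ∈ [y, y+t)) / P(Y ∈ [y, y+t))`. -/
def CondTailIs {Ω : Type*} [MeasurableSpace Ω] (μ : Measure Ω) (X Y : Ω → ℝ)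
    (x y p : ℝ) : Prop :=
  Tendsto (fun t : ℝ =>
      (μ {ω | x < X ω ∧ y ≤ Y ω ∧ Y ω < y + t}).toReal /
        (μ {ω | y ≤ Y ω ∧ Y ω < y + t}).toReal)
    (nhdsWithin 0 (Ioi 0)) (nhds p)

/-- `(X, Y)` is conditionally dependent (CD) with function `s`: the conditional tail
probabilities `P(X > x | Y = y)` exist for all `y ∈ D_Y` and all large `x`, and
`lim_{x→∞} sup_{y ∈ D_Y} |P(X > x | Y = y)/(F̄(x) s(y)) - 1| = 0`. -/
def IsCDWith {Ω : Type*} [MeasurableSpace Ω] (μ : Measure Ω) (X Y : Ω → ℝ)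
    (s : ℝ → ℝ) : Prop :=
  ∃ ct : ℝ → ℝ → ℝ, ∃ x₁ : ℝ,
    (∀ x ≥ x₁, ∀ y ∈ DSetY μ Y, CondTailIs μ X Y x y (ct x y)) ∧
    ∀ ε > (0 : ℝ), ∃ x₀ : ℝ, ∀ x ≥ x₀, ∀ y ∈ DSetY μ Y,
      |ct x y / (tailP μ X x * s y) - 1| ≤ ε


open Topology

section S
set_option linter.unusedSectionVars false
variable {Ω : Type*} [MeasurableSpace Ω] {μ : Measure Ω} [IsProbabilityMeasure μ]

private lemma toReal_mono' {s t : Set Ω} (h : s ⊆ t) : (μ s).toReal ≤ (μ t).toReal :=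
  ENNReal.toReal_mono (measure_ne_top μ t) (measure_mono h)

private lemma toReal_le_one' (s : Set Ω) : (μ s).toReal ≤ 1 := by
  have := toReal_mono' (μ := μ) (subset_univ s); simpa using this

private lemma toReal_compl {s : Set Ω} (hs : MeasurableSet s) :
    (μ sᶜ).toReal = 1 - (μ s).toReal := by
  have h := measure_add_measure_compl (μ := μ) hs
  rw [measure_univ] at h
  have h1 : (μ s).toReal + (μ sᶜ).toReal = 1 := by
    rw [← ENNReal.toReal_add (measure_ne_top μ s) (measure_ne_top μ sᶜ), h]; simp
  linarith

private lemma toReal_union {s t : Set Ω} (hd : Disjoint s t) (ht : MeasurableSet t) :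
    (μ (s ∪ t)).toReal = (μ s).toReal + (μ t).toReal := by
  rw [measure_union hd ht, ENNReal.toReal_add (measure_ne_top μ s) (measure_ne_top μ t)]

private lemma cdf_eq_one_sub {Z : Ω → ℝ} (hZ : Measurable Z) (x : ℝ) :
    cdfP μ Z x = 1 - tailP μ Z x := by
  have hset : {ω | Z ω ≤ x} = {ω | x < Z ω}ᶜ := by ext ω; simp [not_lt]
  rw [cdfP, hset, toReal_compl (measurableSet_lt measurable_const hZ)]
  rfl

/-- toReal of measures of a monotone sequence of measurable sets tends to the union. -/
private lemma tendsto_toReal_iUnion {E : ℕ → Set Ω} (hmono : Monotone E) :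
    Tendsto (fun n => (μ (E n)).toReal) atTop (𝓝 ((μ (⋃ n, E n)).toReal)) := by
  have h := MeasureTheory.tendsto_measure_iUnion_atTop (μ := μ) hmono
  exact (ENNReal.tendsto_toReal (measure_ne_top μ _)).comp h

private lemma stepA (X Y : Ω → ℝ) (hX : Measurable X) (hY : Measurable Y)
    (hjoint : ∀ x y : ℝ, (μ {ω | X ω ≤ x ∧ Y ω ≤ y}).toReal =
      cdfP μ X x * cdfP μ Y y / (1 + tailP μ X x * tailP μ Y y))
    (x c : ℝ) :
    (μ {ω | X ω ≤ x ∧ Y ω < c}).toReal =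
      (1 - tailP μ X x) * (μ {ω | Y ω < c}).toReal /
        (1 + tailP μ X x * (1 - (μ {ω | Y ω < c}).toReal)) := by
  set u : ℝ := tailP μ X x with hu
  set phi : ℝ → ℝ := fun v => (1 - u) * v / (1 + u * (1 - v)) with hphi
  -- sequences
  set E : ℕ → Set Ω := fun n => {ω | X ω ≤ x ∧ Y ω ≤ c - 1 / (n + 1)} with hE
  set Fn : ℕ → Set Ω := fun n => {ω | Y ω ≤ c - 1 / (n + 1)} with hF
  have hcast : ∀ {m n : ℕ}, m ≤ n → (1:ℝ) / (n + 1) ≤ 1 / (m + 1) := by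
    intro m n hmn
    have h1 : (m:ℝ) ≤ n := Nat.cast_le.mpr hmn
    apply one_div_le_one_div_of_le
    · positivity
    · linarith
  have hmonoE : Monotone E := by
    intro m n hmn ω hω
    exact ⟨hω.1, hω.2.trans (by linarith [hcast hmn])⟩
  have hmonoF : Monotone Fn := by
    intro m n hmn ω hω
    simp only [hF, mem_setOf_eq] at hω ⊢
    linarith [hcast hmn]
  have hEU : (⋃ n, E n) = {ω | X ω ≤ x ∧ Y ω < c} := by
    ext ω
    simp only [hE, mem_iUnion, mem_setOf_eq]
    constructor
    · rintro ⟨n, h1, h2⟩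
      have hp : (0:ℝ) < 1 / (n + 1) := by positivity
      exact ⟨h1, by linarith⟩
    · rintro ⟨h1, h2⟩
      obtain ⟨n, hn⟩ := exists_nat_one_div_lt (sub_pos.mpr h2)
      exact ⟨n, h1, by linarith⟩
  have hFU : (⋃ n, Fn n) = {ω | Y ω < c} := by
    ext ω
    simp only [hF, mem_iUnion, mem_setOf_eq]
    constructor
    · rintro ⟨n, h2⟩
      have hp : (0:ℝ) < 1 / (n + 1) := by positivity
      linarith
    · intro h2
      obtain ⟨n, hn⟩ := exists_nat_one_div_lt (sub_pos.mpr h2)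
      exact ⟨n, by linarith⟩
  have htE := tendsto_toReal_iUnion (μ := μ) hmonoE
  have htF := tendsto_toReal_iUnion (μ := μ) hmonoF
  rw [hEU] at htE
  rw [hFU] at htF
  -- value on the sequence
  have hval : ∀ n, (μ (E n)).toReal = phi ((μ (Fn n)).toReal) := by
    intro n
    have := hjoint x (c - 1 / (n + 1))
    rw [cdf_eq_one_sub hX, cdf_eq_one_sub hY] at this
    have htail : tailP μ Y (c - 1/(n+1)) = 1 - (μ (Fn n)).toReal := by
      have := cdf_eq_one_sub (μ := μ) hY (c - 1/(n+1))
      simp only [cdfP, hF] at this ⊢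
      linarith [this]
    rw [htail] at this
    simpa [hphi, hE, hF, hu] using this
  -- continuity of phi at the limit
  have hL0 : (0:ℝ) ≤ (μ {ω | Y ω < c}).toReal := ENNReal.toReal_nonneg
  have hL1 : (μ {ω | Y ω < c}).toReal ≤ 1 := toReal_le_one' _
  have hu0 : 0 ≤ u := ENNReal.toReal_nonneg
  have hdenpos : 0 < 1 + u * (1 - (μ {ω | Y ω < c}).toReal) := by nlinarith
  have hden : 1 + u * (1 - (μ {ω | Y ω < c}).toReal) ≠ 0 := ne_of_gt hdenpos
  have hcont : ContinuousAt phi ((μ {ω | Y ω < c}).toReal) := by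
    apply ContinuousAt.div
    · fun_prop
    · fun_prop
    · exact hden
  have hcomp : Tendsto (fun n => phi ((μ (Fn n)).toReal)) atTop
      (𝓝 (phi ((μ {ω | Y ω < c}).toReal))) := hcont.tendsto.comp htF
  have := tendsto_nhds_unique (htE.congr (fun n => (hval n))) hcomp
  simpa [hphi] using this

end S

section CT
set_option linter.unusedSectionVars false
set_option maxHeartbeats 1000000
variable {Ω : Type*} [MeasurableSpace Ω] {μ : Measure Ω} [IsProbabilityMeasure μ]

private lemma ctval (X Y : Ω → ℝ) (hX : Measurable X) (hY : Measurable Y)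
    (hjoint : ∀ x y : ℝ, (μ {ω | X ω ≤ x ∧ Y ω ≤ y}).toReal =
      cdfP μ X x * cdfP μ Y y / (1 + tailP μ X x * tailP μ Y y))
    (x y p : ℝ)
    (hp : Tendsto (fun t : ℝ =>
      (μ {ω | x < X ω ∧ y ≤ Y ω ∧ Y ω < y + t}).toReal /
        (μ {ω | y ≤ Y ω ∧ Y ω < y + t}).toReal) (𝓝[>] (0:ℝ)) (𝓝 p)) :
    p = 0 ∨
      p = tailP μ X x * ((1 - (μ {ω | Y ω < y}).toReal) + (1 - (μ {ω | Y ω ≤ y}).toReal)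
            + tailP μ X x * (1 + (1 - (μ {ω | Y ω < y}).toReal) * (1 - (μ {ω | Y ω ≤ y}).toReal))) /
          ((1 + tailP μ X x * (1 - (μ {ω | Y ω < y}).toReal)) *
            (1 + tailP μ X x * (1 - (μ {ω | Y ω ≤ y}).toReal))) := by
  set u := tailP μ X x with hu
  set a := (μ {ω | Y ω < y}).toReal with ha
  set b := (μ {ω | Y ω ≤ y}).toReal with hb
  set phi : ℝ → ℝ := fun v => (1 - u) * v / (1 + u * (1 - v)) with hphi
  by_cases hdeg : ∃ t > (0:ℝ), μ {ω | y ≤ Y ω ∧ Y ω < y + t} = 0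
  · left
    obtain ⟨t₀, ht₀, h0⟩ := hdeg
    have hev : (fun t : ℝ =>
        (μ {ω | x < X ω ∧ y ≤ Y ω ∧ Y ω < y + t}).toReal /
          (μ {ω | y ≤ Y ω ∧ Y ω < y + t}).toReal) =ᶠ[𝓝[>] (0:ℝ)] (fun _ => (0:ℝ)) := by
      filter_upwards [Ioo_mem_nhdsGT_of_mem (⟨le_refl (0:ℝ), ht₀⟩ : (0:ℝ) ∈ Ico (0:ℝ) t₀)] with t ht
      have hsub : {ω | y ≤ Y ω ∧ Y ω < y + t} ⊆ {ω | y ≤ Y ω ∧ Y ω < y + t₀} :=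
        fun ω hω => ⟨hω.1, hω.2.trans_le (by linarith [ht.2])⟩
      have h0' : μ {ω | y ≤ Y ω ∧ Y ω < y + t} = 0 := measure_mono_null hsub h0
      simp [h0']
    exact (tendsto_nhds_unique (hp.congr' hev) tendsto_const_nhds)
  · right
    push_neg at hdeg
    have hBpos : ∀ t > (0:ℝ), 0 < (μ {ω | y ≤ Y ω ∧ Y ω < y + t}).toReal := fun t ht =>
      ENNReal.toReal_pos (hdeg t ht) (measure_ne_top μ _)
    set g : ℝ → ℝ := fun t => (μ {ω | Y ω < y + t}).toReal with hg
    have hsplit : ∀ t : ℝ, 0 < t → (μ {ω | y ≤ Y ω ∧ Y ω < y + t}).toReal = g t - a := by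
      intro t ht
      have hset : {ω | Y ω < y + t} = {ω | Y ω < y} ∪ {ω | y ≤ Y ω ∧ Y ω < y + t} := by
        ext ω; simp only [mem_setOf_eq, mem_union]
        constructor
        · intro h; rcases lt_or_ge (Y ω) y with h' | h'
          · exact Or.inl h'
          · exact Or.inr ⟨h', h⟩
        · rintro (h | ⟨_, h⟩); exacts [by linarith, h]
      have hdisj : Disjoint {ω | Y ω < y} {ω | y ≤ Y ω ∧ Y ω < y + t} := by
        rw [Set.disjoint_left]; rintro ω h1 ⟨h2, _⟩; exact absurd h2 (not_le.mpr h1)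
      have hmeas : MeasurableSet {ω | y ≤ Y ω ∧ Y ω < y + t} :=
        (measurableSet_le measurable_const hY).inter (measurableSet_lt hY measurable_const)
      have h := toReal_union (μ := μ) hdisj hmeas
      rw [← hset] at h
      simp only [hg, ha]; linarith [h]
    have hXsplit : ∀ t : ℝ, 0 < t → (μ {ω | X ω ≤ x ∧ y ≤ Y ω ∧ Y ω < y + t}).toReal
        = phi (g t) - phi a := by
      intro t ht
      have hset : {ω | X ω ≤ x ∧ Y ω < y + t}
          = {ω | X ω ≤ x ∧ Y ω < y} ∪ {ω | X ω ≤ x ∧ y ≤ Y ω ∧ Y ω < y + t} := by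
        ext ω; simp only [mem_setOf_eq, mem_union]
        constructor
        · rintro ⟨h1, h2⟩
          rcases lt_or_ge (Y ω) y with h' | h'
          · exact Or.inl ⟨h1, h'⟩
          · exact Or.inr ⟨h1, h', h2⟩
        · rintro (⟨h1, h2⟩ | ⟨h1, h2, h3⟩)
          exacts [⟨h1, by linarith⟩, ⟨h1, h3⟩]
      have hdisj : Disjoint {ω | X ω ≤ x ∧ Y ω < y} {ω | X ω ≤ x ∧ y ≤ Y ω ∧ Y ω < y + t} := by
        rw [Set.disjoint_left]; rintro ω ⟨_, h1⟩ ⟨_, h2, _⟩; exact absurd h2 (not_le.mpr h1)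
      have hmeas : MeasurableSet {ω | X ω ≤ x ∧ y ≤ Y ω ∧ Y ω < y + t} :=
        (measurableSet_le hX measurable_const).inter
          ((measurableSet_le measurable_const hY).inter (measurableSet_lt hY measurable_const))
      have h := toReal_union (μ := μ) hdisj hmeas
      rw [← hset] at h
      have h1 := stepA (μ := μ) X Y hX hY hjoint x (y + t)
      have h2 := stepA (μ := μ) X Y hX hY hjoint x y
      rw [h1, h2] at h
      simp only [hphi, hg, ha]
      linarith [h]
    have hAeq : ∀ t : ℝ, 0 < t → (μ {ω | x < X ω ∧ y ≤ Y ω ∧ Y ω < y + t}).toReal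
        = (g t - a) - (phi (g t) - phi a) := by
      intro t ht
      have hset : {ω | y ≤ Y ω ∧ Y ω < y + t}
          = {ω | X ω ≤ x ∧ y ≤ Y ω ∧ Y ω < y + t} ∪ {ω | x < X ω ∧ y ≤ Y ω ∧ Y ω < y + t} := by
        ext ω; simp only [mem_setOf_eq, mem_union]
        constructor
        · intro h
          rcases le_or_gt (X ω) x with h' | h'
          · exact Or.inl ⟨h', h⟩
          · exact Or.inr ⟨h', h⟩
        · rintro (⟨_, h⟩ | ⟨_, h⟩) <;> exact h
      have hdisj : Disjoint {ω | X ω ≤ x ∧ y ≤ Y ω ∧ Y ω < y + t}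
          {ω | x < X ω ∧ y ≤ Y ω ∧ Y ω < y + t} := by
        rw [Set.disjoint_left]; rintro ω ⟨h1, _⟩ ⟨h2, _⟩; exact absurd h1 (not_le.mpr h2)
      have hmeas : MeasurableSet {ω | x < X ω ∧ y ≤ Y ω ∧ Y ω < y + t} :=
        (measurableSet_lt measurable_const hX).inter
          ((measurableSet_le measurable_const hY).inter (measurableSet_lt hY measurable_const))
      have h := toReal_union (μ := μ) hdisj hmeas
      rw [← hset] at h
      rw [hsplit t ht, hXsplit t ht] at h
      linarith [h]
    have hgta : ∀ t : ℝ, 0 < t → a < g t := by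
      intro t ht
      have h := hBpos t ht; rw [hsplit t ht] at h; linarith
    have hRev : (fun t : ℝ =>
        (μ {ω | x < X ω ∧ y ≤ Y ω ∧ Y ω < y + t}).toReal /
          (μ {ω | y ≤ Y ω ∧ Y ω < y + t}).toReal)
        =ᶠ[𝓝[>] (0:ℝ)] (fun t => 1 - (phi (g t) - phi a) / (g t - a)) := by
      filter_upwards [self_mem_nhdsWithin] with t ht
      have ht' : (0:ℝ) < t := ht
      rw [hsplit t ht', hAeq t ht']
      have hne : g t - a ≠ 0 := ne_of_gt (sub_pos.mpr (hgta t ht'))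
      rw [sub_div, div_self hne]
    -- limit of g
    have hmonog : ∀ s t : ℝ, s ≤ t → g s ≤ g t := by
      intro s t hst
      apply toReal_mono'
      intro ω h
      simp only [mem_setOf_eq] at h ⊢
      linarith
    have hgb : ∀ t : ℝ, 0 < t → b ≤ g t := by
      intro t ht
      apply toReal_mono'
      intro ω h
      simp only [mem_setOf_eq] at h ⊢
      linarith
    have hseq : Tendsto (fun n : ℕ => g (1 / (n + 1))) atTop (𝓝 b) := by
      have hanti : Antitone (fun n : ℕ => {ω | Y ω < y + 1 / (n + 1)}) := by
        intro m n hmn ω hω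
        have h1 : (m:ℝ) ≤ n := Nat.cast_le.mpr hmn
        have h2 : (1:ℝ) / (n + 1) ≤ 1 / (m + 1) := by
          apply one_div_le_one_div_of_le
          · positivity
          · linarith
        simp only [mem_setOf_eq] at hω ⊢
        linarith
      have hinter : (⋂ n : ℕ, {ω | Y ω < y + 1 / (n + 1)}) = {ω | Y ω ≤ y} := by
        ext ω
        simp only [mem_iInter, mem_setOf_eq]
        constructor
        · intro h
          by_contra hc
          push_neg at hc
          obtain ⟨n, hn⟩ := exists_nat_one_div_lt (sub_pos.mpr hc)
          exact absurd (h n) (by push_neg; linarith)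
        · intro h n
          have : (0:ℝ) < 1 / (n + 1) := by positivity
          linarith
      have h := tendsto_measure_iInter_atTop (μ := μ)
        (fun n => (measurableSet_lt hY measurable_const).nullMeasurableSet) hanti
        ⟨0, measure_ne_top μ _⟩
      rw [hinter] at h
      exact (ENNReal.tendsto_toReal (measure_ne_top μ _)).comp h
    have htg : Tendsto g (𝓝[>] (0:ℝ)) (𝓝 b) := by
      rw [Metric.tendsto_nhdsWithin_nhds]
      intro ε hε
      obtain ⟨n, hn⟩ := (hseq.eventually_lt_const (show b < b + ε by linarith)).exists
      refine ⟨1 / (n + 1), by positivity, ?_⟩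
      intro t ht hdist
      have ht' : (0:ℝ) < t := ht
      rw [Real.dist_eq, sub_zero, abs_of_pos ht'] at hdist
      have h2 : g t ≤ g (1 / (n + 1)) := hmonog _ _ (le_of_lt hdist)
      have h3 : b ≤ g t := hgb t ht'
      rw [Real.dist_eq, abs_of_nonneg (by linarith)]
      linarith
    -- basic bounds
    have hu0 : (0:ℝ) ≤ u := ENNReal.toReal_nonneg
    have hu1 : u ≤ 1 := toReal_le_one' _
    have ha0 : (0:ℝ) ≤ a := ENNReal.toReal_nonneg
    have ha1 : a ≤ 1 := toReal_le_one' _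
    have hb0 : (0:ℝ) ≤ b := ENNReal.toReal_nonneg
    have hb1 : b ≤ 1 := toReal_le_one' _
    have hab : a ≤ b := by
      apply toReal_mono'
      intro ω h
      simp only [mem_setOf_eq] at h ⊢
      linarith
    have hdena : (0:ℝ) < 1 + u * (1 - a) := by nlinarith
    have hdenb : (0:ℝ) < 1 + u * (1 - b) := by nlinarith
    rcases eq_or_lt_of_le hab with hba | hba
    · -- no atom : derivative argument
      set d : ℝ := ((1 - u) * (1 + u * (1 - a)) - (1 - u) * a * (-u)) / (1 + u * (1 - a)) ^ 2
        with hd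
      have hd1 : HasDerivAt (fun v : ℝ => (1 - u) * v) (1 - u) a := by
        simpa using (hasDerivAt_id a).const_mul (1 - u)
      have hd2 : HasDerivAt (fun v : ℝ => 1 + u * (1 - v)) (-u) a := by
        have h := (((hasDerivAt_id a).const_sub 1).const_mul u).const_add 1
        simpa using h
      have hder : HasDerivAt phi d a := hd1.div hd2 (ne_of_gt hdena)
      have hslope := hasDerivAt_iff_tendsto_slope.mp hder
      have hgne : Tendsto g (𝓝[>] (0:ℝ)) (𝓝[≠] a) := by
        rw [tendsto_nhdsWithin_iff]
        constructor
        · rw [hba]; exact htg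
        · filter_upwards [self_mem_nhdsWithin] with t ht
          exact (hgta t ht).ne'
      have hcomp : Tendsto (fun t => slope phi a (g t)) (𝓝[>] (0:ℝ)) (𝓝 d) := hslope.comp hgne
      have hR : Tendsto (fun t : ℝ =>
          (μ {ω | x < X ω ∧ y ≤ Y ω ∧ Y ω < y + t}).toReal /
            (μ {ω | y ≤ Y ω ∧ Y ω < y + t}).toReal) (𝓝[>] (0:ℝ)) (𝓝 (1 - d)) := by
        apply Tendsto.congr' hRev.symm
        have : (fun t : ℝ => 1 - (phi (g t) - phi a) / (g t - a))
            = fun t => 1 - slope phi a (g t) := by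
          funext t; rw [slope_def_field]
        rw [this]
        exact tendsto_const_nhds.sub hcomp
      have hpval : p = 1 - d := tendsto_nhds_unique hp hR
      rw [hpval, hd, ← hba]
      field_simp
      ring
    · -- atom at y
      have hcont : ContinuousAt phi b := by
        apply ContinuousAt.div
        · fun_prop
        · fun_prop
        · exact ne_of_gt hdenb
      have hnum : Tendsto (fun t => phi (g t) - phi a) (𝓝[>] (0:ℝ)) (𝓝 (phi b - phi a)) :=
        (hcont.tendsto.comp htg).sub_const _
      have hden : Tendsto (fun t => g t - a) (𝓝[>] (0:ℝ)) (𝓝 (b - a)) := htg.sub_const a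
      have hquot := hnum.div hden (ne_of_gt (sub_pos.mpr hba))
      have hR : Tendsto (fun t : ℝ =>
          (μ {ω | x < X ω ∧ y ≤ Y ω ∧ Y ω < y + t}).toReal /
            (μ {ω | y ≤ Y ω ∧ Y ω < y + t}).toReal) (𝓝[>] (0:ℝ))
          (𝓝 (1 - (phi b - phi a) / (b - a))) := by
        apply Tendsto.congr' hRev.symm
        exact tendsto_const_nhds.sub hquot
      have hpval : p = 1 - (phi b - phi a) / (b - a) := tendsto_nhds_unique hp hR
      rw [hpval]
      simp only [hphi]
      have hne : b - a ≠ 0 := ne_of_gt (sub_pos.mpr hba)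
      field_simp
      ring

end CT


section Main
set_option linter.unusedSectionVars false
set_option maxHeartbeats 1000000
variable {Ω : Type*} [MeasurableSpace Ω] {μ : Measure Ω} [IsProbabilityMeasure μ]

private lemma arith (u₂ u₃ A B S c₂ c₃ : ℝ)
    (hu₂pos : 0 < u₂) (hu₂1 : u₂ ≤ 1) (hu₃pos : 0 < u₃)
    (hu₃le : u₃ ≤ u₂ / 100) (hA : A < u₂ / 100) (hA0 : 0 ≤ A) (hA1 : A ≤ 1)
    (hB0 : 0 ≤ B) (hB1 : B ≤ 1) (hBA : B ≤ A) (hS : 0 < S)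
    (hf₂ : c₂ = u₂ * (A + B + u₂ * (1 + A * B)) / ((1 + u₂ * A) * (1 + u₂ * B)))
    (hf₃ : c₃ = u₃ * (A + B + u₃ * (1 + A * B)) / ((1 + u₃ * A) * (1 + u₃ * B)))
    (hb₂ : |c₂ / (u₂ * S) - 1| ≤ 1 / 2) (hb₃ : |c₃ / (u₃ * S) - 1| ≤ 1 / 2) : False := by
  have hu₃1 : u₃ ≤ 1 := by linarith
  have h3A : (0:ℝ) ≤ u₃ * A := mul_nonneg hu₃pos.le hA0
  have h3B : (0:ℝ) ≤ u₃ * B := mul_nonneg hu₃pos.le hB0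
  have h2A : (0:ℝ) ≤ u₂ * A := mul_nonneg hu₂pos.le hA0
  have h2B : (0:ℝ) ≤ u₂ * B := mul_nonneg hu₂pos.le hB0
  have hAB0 : (0:ℝ) ≤ A * B := mul_nonneg hA0 hB0
  have hAB1 : A * B ≤ 1 := mul_le_one₀ hA1 hB0 hB1
  have h2A1 : u₂ * A ≤ 1 := mul_le_one₀ hu₂1 hA0 hA1
  have h2B1 : u₂ * B ≤ 1 := mul_le_one₀ hu₂1 hB0 hB1
  have hden₃pos : (0:ℝ) < (1 + u₃ * A) * (1 + u₃ * B) := by nlinarith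
  have hden₂pos : (0:ℝ) < (1 + u₂ * A) * (1 + u₂ * B) := by nlinarith
  have hnum₃0 : (0:ℝ) ≤ u₃ * (A + B + u₃ * (1 + A * B)) := by nlinarith
  have hr₃ := (abs_le.mp hb₃).1
  have hr₂ := (abs_le.mp hb₂).2
  have hratio₃ : (1:ℝ)/2 ≤ c₃ / (u₃ * S) := by linarith
  have hratio₂ : c₂ / (u₂ * S) ≤ 3/2 := by linarith
  have hs₃pos : (0:ℝ) < u₃ * S := by positivity
  have hs₂pos : (0:ℝ) < u₂ * S := by positivity
  have h1 : (1:ℝ)/2 * (u₃ * S) ≤ c₃ := (le_div_iff₀ hs₃pos).mp hratio₃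
  have h2 : c₂ ≤ 3/2 * (u₂ * S) := (div_le_iff₀ hs₂pos).mp hratio₂
  have hden₃1 : (1:ℝ) ≤ (1 + u₃ * A) * (1 + u₃ * B) := by nlinarith
  have h3 : c₃ ≤ u₃ * (A + B + u₃ * (1 + A * B)) := by
    rw [hf₃]; exact div_le_self hnum₃0 hden₃1
  have hden₂4 : (1 + u₂ * A) * (1 + u₂ * B) ≤ 4 := by nlinarith
  have h4 : u₂ * u₂ / 4 ≤ c₂ := by
    rw [hf₂, div_le_div_iff₀ (by norm_num) hden₂pos]
    nlinarith [mul_nonneg (mul_nonneg hu₂pos.le hu₂pos.le) hAB0,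
      mul_nonneg hu₂pos.le (add_nonneg (add_nonneg hA0 hB0) (mul_nonneg hu₂pos.le hAB0)),
      mul_le_mul_of_nonneg_left hden₂4 (mul_nonneg hu₂pos.le hu₂pos.le)]
  have hs_le : S ≤ 4 * A + 4 * u₃ := by
    have h5 : u₃ * S ≤ u₃ * (2 * (A + B + u₃ * (1 + A * B))) := by linarith
    have h6 : S ≤ 2 * (A + B + u₃ * (1 + A * B)) := le_of_mul_le_mul_left h5 hu₃pos
    nlinarith [mul_le_mul_of_nonneg_left hAB1 hu₃pos.le]
  have hu₂6s : u₂ ≤ 6 * S := by nlinarith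
  linarith

private lemma main_aux (X Y : Ω → ℝ) (hX : Measurable X) (hY : Measurable Y)
    (hYpos : ∀ ω, 0 < Y ω)
    (hFpos : ∀ x : ℝ, 0 < tailP μ X x)
    (hjoint : ∀ x y : ℝ, (μ {ω | X ω ≤ x ∧ Y ω ≤ y}).toReal =
      cdfP μ X x * cdfP μ Y y / (1 + tailP μ X x * tailP μ Y y))
    (hunbdd : ∀ M : ℝ, ∃ y, (0 < y ∧ ∀ δ > (0:ℝ), 0 < μ {ω | y - δ < Y ω ∧ Y ω < y + δ}) ∧ M < y)
    (s : ℝ → ℝ) (hspos : ∀ y > (0:ℝ), 0 < s y)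
    (ct : ℝ → ℝ → ℝ) (x₁ : ℝ)
    (hct : ∀ x ≥ x₁, ∀ y : ℝ, (0 < y ∧ ∀ δ > (0:ℝ), 0 < μ {ω | y - δ < Y ω ∧ Y ω < y + δ}) →
      Tendsto (fun t : ℝ =>
        (μ {ω | x < X ω ∧ y ≤ Y ω ∧ Y ω < y + t}).toReal /
          (μ {ω | y ≤ Y ω ∧ Y ω < y + t}).toReal) (𝓝[>] (0:ℝ)) (𝓝 (ct x y)))
    (hcd : ∀ ε > (0:ℝ), ∃ x₀ : ℝ, ∀ x ≥ x₀, ∀ y : ℝ,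
      (0 < y ∧ ∀ δ > (0:ℝ), 0 < μ {ω | y - δ < Y ω ∧ Y ω < y + δ}) →
      |ct x y / (tailP μ X x * s y) - 1| ≤ ε) : False := by
  obtain ⟨x₀, hx₀⟩ := hcd (1/2) (by norm_num)
  set x₂ := max x₀ x₁ with hx₂def
  set u₂ := tailP μ X x₂ with hu₂def
  have hu₂pos : 0 < u₂ := hFpos x₂
  have htailanti : ∀ x x' : ℝ, x ≤ x' → tailP μ X x' ≤ tailP μ X x := by
    intro x x' h
    apply toReal_mono'
    intro ω hω
    simp only [mem_setOf_eq] at hω ⊢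
    linarith
  have htail0 : Tendsto (fun n : ℕ => tailP μ X n) atTop (𝓝 0) := by
    have hanti : Antitone (fun n : ℕ => {ω | (n:ℝ) < X ω}) := by
      intro m n hmn ω hω
      have h1 : (m:ℝ) ≤ n := Nat.cast_le.mpr hmn
      simp only [mem_setOf_eq] at hω ⊢
      linarith
    have hinter : (⋂ n : ℕ, {ω | (n:ℝ) < X ω}) = ∅ := by
      ext ω
      simp only [mem_iInter, mem_setOf_eq, mem_empty_iff_false, iff_false]
      push_neg
      obtain ⟨n, hn⟩ := exists_nat_gt (X ω)
      exact ⟨n, le_of_lt hn⟩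
    have h := tendsto_measure_iInter_atTop (μ := μ)
      (fun n => (measurableSet_lt measurable_const hX).nullMeasurableSet) hanti
      ⟨0, measure_ne_top μ _⟩
    rw [hinter, measure_empty] at h
    have h2 := (ENNReal.tendsto_toReal (by simp : (0:ENNReal) ≠ ⊤)).comp h
    exact h2
  obtain ⟨n₃, hn₃⟩ := (htail0.eventually_lt_const (show (0:ℝ) < u₂/100 by linarith)).exists
  set x₃ := max x₂ (n₃ : ℝ) with hx₃def
  set u₃ := tailP μ X x₃ with hu₃def
  have hu₃pos : 0 < u₃ := hFpos x₃
  have hu₃le : u₃ ≤ u₂/100 := le_of_lt (lt_of_le_of_lt (htailanti _ _ (le_max_right _ _)) hn₃)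
  have hG1 : Tendsto (fun n : ℕ => (μ {ω | Y ω < (n:ℝ)}).toReal) atTop (𝓝 1) := by
    have hmono : Monotone (fun n : ℕ => {ω | Y ω < (n:ℝ)}) := by
      intro m n hmn ω hω
      have h1 : (m:ℝ) ≤ n := Nat.cast_le.mpr hmn
      simp only [mem_setOf_eq] at hω ⊢
      linarith
    have hunion : (⋃ n : ℕ, {ω | Y ω < (n:ℝ)}) = univ := by
      ext ω
      simp only [mem_iUnion, mem_setOf_eq, mem_univ, iff_true]
      exact exists_nat_gt (Y ω)
    have h := tendsto_toReal_iUnion (μ := μ) hmono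
    rw [hunion] at h
    simpa using h
  obtain ⟨N, hN⟩ := (hG1.eventually_const_lt (show 1 - u₂/100 < 1 by linarith)).exists
  obtain ⟨y, hyD, hy⟩ := hunbdd N
  have hy0 : 0 < y := hyD.1
  set a := (μ {ω | Y ω < y}).toReal with hadef
  set b := (μ {ω | Y ω ≤ y}).toReal with hbdef
  have haN : (μ {ω | Y ω < (N:ℝ)}).toReal ≤ a := by
    apply toReal_mono'
    intro ω hω
    simp only [mem_setOf_eq] at hω ⊢
    linarith
  have hA : 1 - a < u₂/100 := by linarith
  have hab : a ≤ b := by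
    apply toReal_mono'
    intro ω hω
    simp only [mem_setOf_eq] at hω ⊢
    linarith
  have hb1 : b ≤ 1 := toReal_le_one' _
  have hB0 : (0:ℝ) ≤ 1 - b := by linarith
  have hBA : 1 - b ≤ 1 - a := by linarith
  have hu₂1 : u₂ ≤ 1 := toReal_le_one' _
  have hA1 : 1 - a ≤ 1 := by
    have : (0:ℝ) ≤ a := ENNReal.toReal_nonneg
    linarith
  have hB1 : 1 - b ≤ 1 := by linarith [hab, hA1]
  have hsy : 0 < s y := hspos y hy0
  have hx₂x₁ : x₂ ≥ x₁ := le_max_right x₀ x₁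
  have hx₃x₂ : x₃ ≥ x₂ := le_max_left _ _
  have hx₂x₀ : x₂ ≥ x₀ := le_max_left x₀ x₁
  have hv₂ := ctval (μ := μ) X Y hX hY hjoint x₂ y (ct x₂ y) (hct x₂ hx₂x₁ y hyD)
  have hv₃ := ctval (μ := μ) X Y hX hY hjoint x₃ y (ct x₃ y)
    (hct x₃ (le_trans hx₂x₁ hx₃x₂) y hyD)
  have hb₂ := hx₀ x₂ hx₂x₀ y hyD
  have hb₃ := hx₀ x₃ (le_trans hx₂x₀ hx₃x₂) y hyD
  rw [← hu₂def] at hb₂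
  rw [← hu₃def] at hb₃
  rcases hv₂ with h0 | hf₂
  · rw [h0, zero_div] at hb₂; norm_num at hb₂
  rcases hv₃ with h0 | hf₃
  · rw [h0, zero_div] at hb₃; norm_num at hb₃
  rw [← hadef, ← hbdef, ← hu₂def] at hf₂
  rw [← hadef, ← hbdef, ← hu₃def] at hf₃
  exact arith u₂ u₃ (1 - a) (1 - b) (s y) (ct x₂ y) (ct x₃ y)
    hu₂pos hu₂1 hu₃pos hu₃le hA (le_trans hB0 hBA) hA1 hB0 hB1 hBA hsy hf₂ hf₃ hb₂ hb₃

end Main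

/-- **Proposition 2.3 (third part).** For a bivariate AMH distribution with `θ = -1`
whose `D_Y` is unbounded, `(X,Y)` is not CD: there is no positive measurable function
`s` on `(0,∞)` for which the uniform convergence over `D_Y` holds. -/
theorem amh_minus_one_not_CD {Ω : Type*} [MeasurableSpace Ω] (μ : Measure Ω)
    [IsProbabilityMeasure μ]
    (X Y : Ω → ℝ) (hX : Measurable X) (hY : Measurable Y)
    (hYpos : ∀ ω, 0 < Y ω)
    (hFpos : ∀ x : ℝ, 0 < tailP μ X x)
    (hjoint : ∀ x y : ℝ, (μ {ω | X ω ≤ x ∧ Y ω ≤ y}).toReal =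
      cdfP μ X x * cdfP μ Y y / (1 + tailP μ X x * tailP μ Y y))
    (hunbdd : ∀ M : ℝ, ∃ y ∈ DSetY μ Y, M < y) :
    ¬ ∃ s : ℝ → ℝ, (∀ y > (0 : ℝ), 0 < s y) ∧ Measurable s ∧ IsCDWith μ X Y s := by
  rintro ⟨s, hspos, -, ct, x₁, hct, hcd⟩
  exact main_aux X Y hX hY hYpos hFpos hjoint hunbdd s hspos ct x₁ hct hcd
end

section
/- Let (X,Y) be a conditionally dependent (CD) random vector with function s, where the marginal distribution F of X satisfies F̄(x) > 0 for all real x. Then s is bounded on D_Y: there exists a constant C > 0 such that s(y) ≤ C for all y ∈ D_Y. -/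
/-!
A conditional tail probability is at most `1`. Fixing one large `x` at which the CD
ratio is uniformly within `1/2` of `1` gives `F̄(x) s(y) / 2 ≤ P(X > x | Y = y) ≤ 1`
for every `y ∈ D_Y`, so `s ≤ 2 / F̄(x)` on `D_Y`.
-/

open MeasureTheory Filter Set Real ProbabilityTheory

lemma toReal_measure_div_le_one_of_subset {Ω : Type*} [MeasurableSpace Ω] (μ : Measure Ω)
    {A B : Set Ω} (hAB : A ⊆ B) : (μ A).toReal / (μ B).toReal ≤ 1 := by
  by_cases hB : μ B = ⊤
  · simp [hB]
  · exact div_le_one_of_le₀ (ENNReal.toReal_mono hB (measure_mono hAB)) ENNReal.toReal_nonneg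

lemma CondTailIs.le_one {Ω : Type*} [MeasurableSpace Ω] {μ : Measure Ω} {X Y : Ω → ℝ}
    {x y p : ℝ} (h : CondTailIs μ X Y x y p) : p ≤ 1 :=
  le_of_tendsto h <| Eventually.of_forall fun _ =>
    toReal_measure_div_le_one_of_subset μ fun _ hω => hω.2

theorem CD_s_bounded_general {Ω : Type*} [MeasurableSpace Ω] (μ : Measure Ω)
    (X Y : Ω → ℝ)
    (hFpos : ∀ x : ℝ, 0 < tailP μ X x)
    (s : ℝ → ℝ) (hspos : ∀ y > (0 : ℝ), 0 < s y)
    (hCD : IsCDWith μ X Y s) :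
    ∃ C > (0 : ℝ), ∀ y ∈ DSetY μ Y, s y ≤ C := by
  obtain ⟨ct, x₁, hct, hratio⟩ := hCD
  obtain ⟨x₀, hx₀⟩ := hratio (1 / 2) (by norm_num)
  set x := max x₀ x₁
  have hF := hFpos x
  refine ⟨2 / tailP μ X x, by positivity, fun y hy => ?_⟩
  have hct_le : ct x y ≤ 1 := (hct x (le_max_right _ _) y hy).le_one
  have hhalf : 1 / 2 ≤ ct x y / (tailP μ X x * s y) := by
    linarith [(abs_le.mp (hx₀ x (le_max_left _ _) y hy)).1]
  have hs := hspos y hy.1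
  rw [le_div_iff₀ (by positivity)] at hhalf
  rw [le_div_iff₀ hF]
  linarith

/-- **Proposition 2.4.** If `(X,Y)` is CD with a positive measurable function `s` and
`F̄(x) > 0` for all `x`, then `s` is bounded on `D_Y`. -/
theorem CD_s_bounded {Ω : Type*} [MeasurableSpace Ω] (μ : Measure Ω) [IsProbabilityMeasure μ]
    (X Y : Ω → ℝ) (hX : Measurable X) (hY : Measurable Y)
    (hYpos : ∀ ω, 0 < Y ω)
    (hFpos : ∀ x : ℝ, 0 < tailP μ X x)
    (s : ℝ → ℝ) (hspos : ∀ y > (0 : ℝ), 0 < s y) (hsmeas : Measurable s)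
    (hCD : IsCDWith μ X Y s) :
    ∃ C > (0 : ℝ), ∀ y ∈ DSetY μ Y, s y ≤ C :=
  CD_s_bounded_general μ X Y hFpos s hspos hCD
end
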